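/- arXiv:1604.00591 — 4 statements merged into one kernel-verified Lean document; each statement's English description precedes it below -/
import Mathlib

section
/- Define F_p(λ) = [ (1/2)( (λ^{p/2} + (1−λ)^{p/2})^4 − (λ^p + (1−λ)^p)^2 ) ]^{1/p} for λ ∈ [0,1]. If 0 < p ≤ 3, then F_p attains its maximum on [0,1] uniquely at λ = 1/2. -/
/-!
Put `x = √λ`, `y = √(1 - λ)`. Then `F_p(λ)^p = 2 ∑ wᵢ ^ p` for the three numbers
`w = (x³y, x²y², xy³)`, and `F_p(1/2)^p = 6 (1/4)^p`. Since `p/3 ≤ 1`, concavity of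
`t ↦ t ^ (p/3)` bounds the mean of the `wᵢ ^ p = (wᵢ³) ^ (p/3)` by the `(p/3)`-th power of the
mean of the cubes `wᵢ³`, and with `t = xy < 1/2` that sum of cubes is the polynomial
`t³ - 3t⁵ + t⁶`, which stays below its value `3/64` at `t = 1/2`.
-/

namespace Real

theorem arith_mean_rpow_le_rpow_arith_mean {ι : Type*} (s : Finset ι) (w z : ι → ℝ)
    (hw : ∀ i ∈ s, 0 ≤ w i) (hw' : ∑ i ∈ s, w i = 1) (hz : ∀ i ∈ s, 0 ≤ z i) {p : ℝ}
    (hp₀ : 0 ≤ p) (hp₁ : p ≤ 1) :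
    ∑ i ∈ s, w i * z i ^ p ≤ (∑ i ∈ s, w i * z i) ^ p :=
  (concaveOn_rpow hp₀ hp₁).le_map_sum hw hw' hz

lemma pow_rpow_div_two {u : ℝ} (hu : 0 ≤ u) (p : ℝ) : (u ^ 2) ^ (p / 2) = u ^ p := by
  rw [← rpow_natCast, ← rpow_mul hu, Nat.cast_ofNat, mul_div_cancel₀ p two_ne_zero]

lemma pow_rpow_div_three {u : ℝ} (hu : 0 ≤ u) (p : ℝ) : (u ^ 3) ^ (p / 3) = u ^ p := by
  rw [← rpow_natCast, ← rpow_mul hu, Nat.cast_ofNat, mul_div_cancel₀ p three_ne_zero]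

end Real

lemma pow_three_sub_pow_five_add_pow_six_lt {t : ℝ} (h₀ : 0 ≤ t) (h₁ : t < 1 / 2) :
    t ^ 3 - 3 * t ^ 5 + t ^ 6 < 3 / 64 := by
  have hg : 0 < -t ^ 4 + 2 * t ^ 3 + 9 / 4 * t ^ 2 + 3 / 4 * t + 3 / 16 := by
    nlinarith [mul_nonneg (mul_nonneg (mul_nonneg h₀ h₀) h₀) (by linarith : (0 : ℝ) ≤ 2 - t)]
  -- `3/64 - (t³ - 3t⁵ + t⁶)` factors as `(1/2 - t)²` times the quartic in `hg`.
  nlinarith [mul_pos (pow_pos (by linarith : 0 < 1 / 2 - t) 2) hg]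

lemma cube_sum_lt_of_sq_add_sq_eq_one {x y : ℝ} (hx : 0 ≤ x) (hy : 0 ≤ y) (hxy : x ^ 2 + y ^ 2 = 1)
    (hne : x ≠ y) :
    (x ^ 3 * y) ^ 3 + (x ^ 2 * y ^ 2) ^ 3 + (x * y ^ 3) ^ 3 < 3 / 64 := by
  have hsq : 0 < (x - y) ^ 2 := by
    have := sub_ne_zero.2 hne
    positivity
  have hsum : (x ^ 3 * y) ^ 3 + (x ^ 2 * y ^ 2) ^ 3 + (x * y ^ 3) ^ 3
      = (x * y) ^ 3 - 3 * (x * y) ^ 5 + (x * y) ^ 6 := by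
    linear_combination
      (x * y) ^ 3 * ((x ^ 2 + y ^ 2) ^ 2 + (x ^ 2 + y ^ 2) + 1 - 3 * (x * y) ^ 2) * hxy
  rw [hsum]
  exact pow_three_sub_pow_five_add_pow_six_lt (by positivity) (by nlinarith)

lemma rpow_sum_lt_of_sq_add_sq_eq_one {x y : ℝ} (hx : 0 ≤ x) (hy : 0 ≤ y) (hxy : x ^ 2 + y ^ 2 = 1)
    (hne : x ≠ y) {p : ℝ} (hp : 0 < p) (hp3 : p ≤ 3) :
    (x ^ 3 * y) ^ p + (x ^ 2 * y ^ 2) ^ p + (x * y ^ 3) ^ p < 3 * (1 / 4) ^ p := by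
  have hmean := Real.arith_mean_rpow_le_rpow_arith_mean Finset.univ (fun _ => 1 / 3)
    (fun i => ![x ^ 3 * y, x ^ 2 * y ^ 2, x * y ^ 3] i ^ 3) (fun _ _ => by norm_num) (by simp)
    (fun i _ => by
      fin_cases i <;> simp only [Fin.zero_eta, Fin.mk_one, Fin.reduceFinMk, Matrix.cons_val] <;>
        positivity) (p := p / 3) (by positivity) (by linarith)
  simp only [Fin.sum_univ_three, Matrix.cons_val] at hmean
  rw [Real.pow_rpow_div_three (by positivity), Real.pow_rpow_div_three (by positivity),
    Real.pow_rpow_div_three (by positivity)] at hmean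
  have hcubes := cube_sum_lt_of_sq_add_sq_eq_one hx hy hxy hne
  calc (x ^ 3 * y) ^ p + (x ^ 2 * y ^ 2) ^ p + (x * y ^ 3) ^ p
      ≤ 3 * (1 / 3 * (x ^ 3 * y) ^ 3 + 1 / 3 * (x ^ 2 * y ^ 2) ^ 3 + 1 / 3 * (x * y ^ 3) ^ 3)
          ^ (p / 3) := by linarith
    _ < 3 * ((1 / 4) ^ 3) ^ (p / 3) := by gcongr; linarith
    _ = 3 * (1 / 4) ^ p := by rw [Real.pow_rpow_div_three (by norm_num)]

lemma half_mul_rpow_sum_sub_eq {x y : ℝ} (hx : 0 ≤ x) (hy : 0 ≤ y) (p : ℝ) :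
    1 / 2 * (((x ^ 2) ^ (p / 2) + (y ^ 2) ^ (p / 2)) ^ 4 - ((x ^ 2) ^ p + (y ^ 2) ^ p) ^ 2)
      = 2 * ((x ^ 3 * y) ^ p + (x ^ 2 * y ^ 2) ^ p + (x * y ^ 3) ^ p) := by
  simp only [Real.pow_rpow_div_two hx, Real.pow_rpow_div_two hy,
    Real.mul_rpow (pow_nonneg hx _) (pow_nonneg hy _), Real.mul_rpow hx (pow_nonneg hy _),
    Real.mul_rpow (pow_nonneg hx _) hy, ← Real.rpow_pow_comm hx, ← Real.rpow_pow_comm hy]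
  ring

/-- For `0 < p ≤ 3`, `F_p` attains its maximum on `[0,1]` uniquely at `λ = 1/2`. -/
theorem stmt8 (p : ℝ) (hp : 0 < p) (hp3 : p ≤ 3)
    (F : ℝ → ℝ)
    (hF : ∀ l, F l = ((1 / 2) * ((l ^ (p / 2) + (1 - l) ^ (p / 2)) ^ 4
        - (l ^ p + (1 - l) ^ p) ^ 2)) ^ (1 / p)) :
    ∀ l ∈ Set.Icc (0 : ℝ) 1, l ≠ 1 / 2 → F l < F (1 / 2) := by
  rintro l ⟨hl₀, hl₁⟩ hne
  have hl₁' : 0 ≤ 1 - l := sub_nonneg.2 hl₁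
  have hl : 1 / 2 * ((l ^ (p / 2) + (1 - l) ^ (p / 2)) ^ 4 - (l ^ p + (1 - l) ^ p) ^ 2)
      = 2 * ((√l ^ 3 * √(1 - l)) ^ p + (√l ^ 2 * √(1 - l) ^ 2) ^ p
        + (√l * √(1 - l) ^ 3) ^ p) := by
    simpa only [Real.sq_sqrt hl₀, Real.sq_sqrt hl₁'] using
      half_mul_rpow_sum_sub_eq (Real.sqrt_nonneg l) (Real.sqrt_nonneg (1 - l)) p
  have hhalf : 1 / 2 * (((1 / 2 : ℝ) ^ (p / 2) + (1 - 1 / 2 : ℝ) ^ (p / 2)) ^ 4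
      - ((1 / 2 : ℝ) ^ p + (1 - 1 / 2 : ℝ) ^ p) ^ 2) = 2 * (3 * (1 / 4) ^ p) := by
    have hsq : (1 / 2 : ℝ) ^ p = ((1 / 2 : ℝ) ^ (p / 2)) ^ 2 := by
      rw [Real.rpow_pow_comm (by norm_num), Real.pow_rpow_div_two (by norm_num)]
    have hquarter : (1 / 4 : ℝ) ^ p = ((1 / 2) ^ p) ^ 2 := by
      rw [Real.rpow_pow_comm (by norm_num)]
      norm_num
    rw [show (1 : ℝ) - 1 / 2 = 1 / 2 by norm_num, hquarter, hsq]
    ring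
  have hlt := rpow_sum_lt_of_sq_add_sq_eq_one (Real.sqrt_nonneg l) (Real.sqrt_nonneg (1 - l))
    (by rw [Real.sq_sqrt hl₀, Real.sq_sqrt hl₁']; ring)
    (fun h => hne (by linarith [(Real.sqrt_inj hl₀ hl₁').1 h])) hp hp3
  rw [hF, hF, hl, hhalf]
  exact Real.rpow_lt_rpow (by positivity) (by linarith) (by positivity)
end

section
/- Let F_p(λ_1, λ_2) = [ (1/2)( μ_{p/2}^4 − μ_p^2 ) ]^{1/p} with μ_q = λ_1^q + λ_2^q, defined for λ_1, λ_2 ≥ 0 with λ_1 + λ_2 = 1. For 0 < p ≤ 3 and λ_1, λ_2 in the open interval (0,1), the Schur-concavity condition holds: (λ_1 − λ_2)(∂F_p/∂λ_1 − ∂F_p/∂λ_2) ≤ 0. -/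
/-!
Write `a = x^(p/2)`, `b = y^(p/2)`. The inner expression of `F_p` is `2ab(a² + ab + b²)`, and
`x ∂ₓ` of it is `p·ab(3a² + 2ab + b²)`; the outer power `1/p` only contributes a positive factor
common to both partial derivatives. The condition therefore reduces, for `y ≤ x`, to
`y(3a² + 2ab + b²) ≤ x(a² + 2ab + 3b²)`. Putting `w = x^(p/6)`, `v = y^(p/6)` (so `a = w³`,
`b = v³`), the hypothesis `p ≤ 3` gives `w² y ≤ v² x`, and what is left is the polynomial inequality
`v²(3w⁶ + 2w³v³ + v⁶) ≤ w²(w⁶ + 2w³v³ + 3v⁶)`, whose difference is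
`(w - v)³(w⁵ + 3w⁴v + 3w³v² + 3w²v³ + 3wv⁴ + v⁵)`.
-/

open Real

variable {p x y : ℝ}

/-- `F_p(x, y) = lsbInner p x y ^ (1/p)`, with `μ_q = x^q + y^q`. -/
noncomputable def lsbInner (p x y : ℝ) : ℝ :=
  (1 / 2) * ((x ^ (p / 2) + y ^ (p / 2)) ^ 4 - (x ^ p + y ^ p) ^ 2)

noncomputable def lsbF (p x y : ℝ) : ℝ := lsbInner p x y ^ (1 / p)

lemma lsbInner_comm (p x y : ℝ) : lsbInner p x y = lsbInner p y x := by
  unfold lsbInner; ring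

lemma lsbF_comm (p x y : ℝ) : lsbF p x y = lsbF p y x := by
  rw [lsbF, lsbF, lsbInner_comm]

lemma rpow_eq_rpow_half_sq (hx : 0 ≤ x) (p : ℝ) : x ^ p = (x ^ (p / 2)) ^ 2 := by
  rw [← rpow_mul_natCast hx]; norm_num

lemma lsbInner_eq (hx : 0 ≤ x) (hy : 0 ≤ y) :
    lsbInner p x y = 2 * x ^ (p / 2) * y ^ (p / 2) *
      (x ^ p + x ^ (p / 2) * y ^ (p / 2) + y ^ p) := by
  rw [lsbInner, rpow_eq_rpow_half_sq hx p, rpow_eq_rpow_half_sq hy p]; ring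

lemma lsbInner_pos (hx : 0 < x) (hy : 0 < y) : 0 < lsbInner p x y := by
  rw [lsbInner_eq hx.le hy.le]; positivity

lemma hasDerivAt_lsbInner_left (hx : 0 < x) (hy : 0 ≤ y) :
    HasDerivAt (fun t => lsbInner p t y)
      (p * x ^ (p / 2) * y ^ (p / 2) * (3 * x ^ p + 2 * x ^ (p / 2) * y ^ (p / 2) + y ^ p) / x)
      x := by
  have hhalf := hasDerivAt_rpow_const (p := p / 2) (Or.inl hx.ne')
  have hfull := hasDerivAt_rpow_const (p := p) (Or.inl hx.ne')
  refine ((((hhalf.add_const (y ^ (p / 2))).pow 4).sub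
    ((hfull.add_const (y ^ p)).pow 2)).const_mul (1 / 2 : ℝ)).congr_deriv ?_
  rw [rpow_sub_one hx.ne', rpow_sub_one hx.ne', rpow_eq_rpow_half_sq hx.le p,
    rpow_eq_rpow_half_sq hy p]
  field_simp
  ring

lemma hasDerivAt_lsbF_left (hp : p ≠ 0) (hx : 0 < x) (hy : 0 < y) :
    HasDerivAt (fun t => lsbF p t y)
      (x ^ (p / 2) * y ^ (p / 2) * (3 * x ^ p + 2 * x ^ (p / 2) * y ^ (p / 2) + y ^ p) / x *
        lsbInner p x y ^ (1 / p - 1)) x := by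
  refine ((hasDerivAt_lsbInner_left (p := p) hx hy.le).rpow_const
    (Or.inl (lsbInner_pos hx hy).ne')).congr_deriv ?_
  field_simp

lemma hasDerivAt_lsbF_right (hp : p ≠ 0) (hx : 0 < x) (hy : 0 < y) :
    HasDerivAt (fun t => lsbF p x t)
      (y ^ (p / 2) * x ^ (p / 2) * (3 * y ^ p + 2 * y ^ (p / 2) * x ^ (p / 2) + x ^ p) / y *
        lsbInner p x y ^ (1 / p - 1)) y := by
  simpa only [lsbF_comm p x, lsbInner_comm p y x] using hasDerivAt_lsbF_left hp hy hx

lemma schur_poly_ineq {v w : ℝ} (hv : 0 ≤ v) (hvw : v ≤ w) :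
    v ^ 2 * (3 * w ^ 6 + 2 * w ^ 3 * v ^ 3 + v ^ 6) ≤
      w ^ 2 * (w ^ 6 + 2 * w ^ 3 * v ^ 3 + 3 * v ^ 6) := by
  have hw : 0 ≤ w := hv.trans hvw
  have hd : 0 ≤ w - v := sub_nonneg.mpr hvw
  rw [← sub_nonneg]
  calc (0 : ℝ) ≤ (w - v) ^ 3 * (w ^ 5 + 3 * w ^ 4 * v + 3 * w ^ 3 * v ^ 2 + 3 * w ^ 2 * v ^ 3 +
        3 * w * v ^ 4 + v ^ 5) := by positivity
    _ = _ := by ring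

lemma rpow_sixth_sq_mul_le (hp3 : p ≤ 3) (hy : 0 < y) (hyx : y ≤ x) :
    (x ^ (p / 6)) ^ 2 * y ≤ (y ^ (p / 6)) ^ 2 * x := by
  have hx : 0 < x := hy.trans_le hyx
  have hsq : ∀ z : ℝ, 0 ≤ z → (z ^ (p / 6)) ^ 2 = z ^ (p / 3) := fun z hz => by
    rw [← rpow_mul_natCast hz]; ring_nf
  have hmono : x ^ (p / 3 - 1) ≤ y ^ (p / 3 - 1) := rpow_le_rpow_of_nonpos hy hyx (by linarith)
  rw [rpow_sub_one hx.ne', rpow_sub_one hy.ne', div_le_div_iff₀ hx hy] at hmono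
  rwa [hsq x hx.le, hsq y hy.le]

lemma rpow_schur_ineq (hp : 0 < p) (hp3 : p ≤ 3) (hy : 0 < y) (hyx : y ≤ x) :
    y * (3 * x ^ p + 2 * x ^ (p / 2) * y ^ (p / 2) + y ^ p) ≤
      x * (x ^ p + 2 * x ^ (p / 2) * y ^ (p / 2) + 3 * y ^ p) := by
  have hx : 0 < x := hy.trans_le hyx
  have hcube : ∀ z : ℝ, 0 ≤ z → z ^ (p / 2) = (z ^ (p / 6)) ^ 3 ∧ z ^ p = (z ^ (p / 6)) ^ 6 :=
    fun z hz => ⟨by rw [← rpow_mul_natCast hz]; ring_nf, by rw [← rpow_mul_natCast hz]; ring_nf⟩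
  have hcross := rpow_sixth_sq_mul_le hp3 hy hyx
  obtain ⟨hxa, hxp⟩ := hcube x hx.le
  obtain ⟨hyb, hyp⟩ := hcube y hy.le
  rw [hxa, hxp, hyb, hyp]
  set w := x ^ (p / 6)
  set v := y ^ (p / 6)
  have hv : 0 < v := rpow_pos_of_pos hy _
  have hvw : v ≤ w := rpow_le_rpow hy.le hyx (by positivity)
  refine le_of_mul_le_mul_left ?_ (pow_pos hv 2)
  calc v ^ 2 * (y * (3 * w ^ 6 + 2 * w ^ 3 * v ^ 3 + v ^ 6))
      = y * (v ^ 2 * (3 * w ^ 6 + 2 * w ^ 3 * v ^ 3 + v ^ 6)) := by ring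
    _ ≤ y * (w ^ 2 * (w ^ 6 + 2 * w ^ 3 * v ^ 3 + 3 * v ^ 6)) :=
        mul_le_mul_of_nonneg_left (schur_poly_ineq hv.le hvw) hy.le
    _ = w ^ 2 * y * (w ^ 6 + 2 * w ^ 3 * v ^ 3 + 3 * v ^ 6) := by ring
    _ ≤ v ^ 2 * x * (w ^ 6 + 2 * w ^ 3 * v ^ 3 + 3 * v ^ 6) :=
        mul_le_mul_of_nonneg_right hcross (by positivity)
    _ = v ^ 2 * (x * (w ^ 6 + 2 * w ^ 3 * v ^ 3 + 3 * v ^ 6)) := by ring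

lemma sub_mul_schur_nonpos (hp : 0 < p) (hp3 : p ≤ 3) (hx : 0 < x) (hy : 0 < y) :
    (x - y) * (y * (3 * x ^ p + 2 * x ^ (p / 2) * y ^ (p / 2) + y ^ p) -
      x * (x ^ p + 2 * x ^ (p / 2) * y ^ (p / 2) + 3 * y ^ p)) ≤ 0 := by
  rcases le_total y x with hyx | hxy
  · exact mul_nonpos_of_nonneg_of_nonpos (sub_nonneg.mpr hyx)
      (sub_nonpos.mpr (rpow_schur_ineq hp hp3 hy hyx))
  · nlinarith [mul_nonneg (sub_nonneg.mpr hxy) (sub_nonneg.mpr (rpow_schur_ineq hp hp3 hx hxy))]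

theorem stmt9_general (p : ℝ) (hp : 0 < p) (hp3 : p ≤ 3)
    (G : ℝ → ℝ → ℝ)
    (hG : ∀ x y, G x y = ((1 / 2) * ((x ^ (p / 2) + y ^ (p / 2)) ^ 4
        - (x ^ p + y ^ p) ^ 2)) ^ (1 / p))
    (l1 l2 : ℝ) (h1 : l1 ∈ Set.Ioo (0 : ℝ) 1) (h2 : l2 ∈ Set.Ioo (0 : ℝ) 1) :
    (l1 - l2) * (deriv (fun x => G x l2) l1 - deriv (fun y => G l1 y) l2) ≤ 0 := by
  have hx := h1.1
  have hy := h2.1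
  obtain rfl : G = lsbF p := funext fun x => funext (hG x)
  rw [(hasDerivAt_lsbF_left hp.ne' hx hy).deriv, (hasDerivAt_lsbF_right hp.ne' hx hy).deriv]
  have hK : 0 ≤ lsbInner p l1 l2 ^ (1 / p - 1) := rpow_nonneg (lsbInner_pos hx hy).le _
  have ha := rpow_pos_of_pos hx (p / 2)
  have hb := rpow_pos_of_pos hy (p / 2)
  calc _ = lsbInner p l1 l2 ^ (1 / p - 1) * (l1 ^ (p / 2) * l2 ^ (p / 2) / (l1 * l2)) *
        ((l1 - l2) * (l2 * (3 * l1 ^ p + 2 * l1 ^ (p / 2) * l2 ^ (p / 2) + l2 ^ p) -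
          l1 * (l1 ^ p + 2 * l1 ^ (p / 2) * l2 ^ (p / 2) + 3 * l2 ^ p))) := by
        field_simp; ring
    _ ≤ 0 := mul_nonpos_of_nonneg_of_nonpos (by positivity) (sub_mul_schur_nonpos hp hp3 hx hy)

/-- Schur-concavity condition for `F_p` when `0 < p ≤ 3`. -/
theorem stmt9 (p : ℝ) (hp : 0 < p) (hp3 : p ≤ 3)
    (G : ℝ → ℝ → ℝ)
    (hG : ∀ x y, G x y = ((1 / 2) * ((x ^ (p / 2) + y ^ (p / 2)) ^ 4
        - (x ^ p + y ^ p) ^ 2)) ^ (1 / p))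
    (l1 l2 : ℝ) (h1 : l1 ∈ Set.Ioo (0 : ℝ) 1) (h2 : l2 ∈ Set.Ioo (0 : ℝ) 1)
    (hsum : l1 + l2 = 1) :
    (l1 - l2) * (deriv (fun x => G x l2) l1 - deriv (fun y => G l1 y) l2) ≤ 0 :=
  stmt9_general p hp hp3 G hG l1 l2 h1 h2
end

section
/- For λ ∈ [0,1], define g(θ) = √(λ(1−λ)) { [2 + |(1−2λ) sin 2θ|] + (1/√2) √( 1 + 4λ(1−λ) + (4λ(1−λ) − 1) cos 4θ ) }. Then min over θ ∈ ℝ of g(θ) equals 2√(λ(1−λ)) (1 + √(λ(1−λ))), and the minimum is attained at θ = 0. -/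
/-!
Write `m = λ(1−λ)`. The coefficient `4m − 1 = −(1 − 2λ)²` of `cos 4θ` is never positive, so the
radicand is smallest when `cos 4θ = 1`, where it equals `8m`; the term `|(1−2λ) sin 2θ|` is
smallest when `sin 2θ = 0`. Both happen at `θ = 0`, and there `(1/√2)·√(8m) = 2√m`.
-/

lemma eight_mul_le_radicand (l : ℝ) {c : ℝ} (hc : c ≤ 1) :
    8 * (l * (1 - l)) ≤ 1 + 4 * l * (1 - l) + (4 * l * (1 - l) - 1) * c := by
  nlinarith [mul_nonneg (sq_nonneg (1 - 2 * l)) (sub_nonneg.2 hc)]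

lemma one_div_sqrt_two_mul_sqrt_eight_mul (x : ℝ) :
    1 / Real.sqrt 2 * Real.sqrt (8 * x) = 2 * Real.sqrt x := by
  have h8 : Real.sqrt 8 = 2 * Real.sqrt 2 := by
    rw [show (8 : ℝ) = 2 ^ 2 * 2 by norm_num, Real.sqrt_mul (by norm_num),
      Real.sqrt_sq (by norm_num)]
  rw [Real.sqrt_mul (by norm_num), h8]
  field_simp

theorem stmt10_general (l : ℝ)
    (g : ℝ → ℝ)
    (hg : ∀ θ, g θ = Real.sqrt (l * (1 - l)) *
      ((2 + |(1 - 2 * l) * Real.sin (2 * θ)|) +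
        (1 / Real.sqrt 2) * Real.sqrt (1 + 4 * l * (1 - l)
          + (4 * l * (1 - l) - 1) * Real.cos (4 * θ)))) :
    (∀ θ, g 0 ≤ g θ) ∧
      g 0 = 2 * Real.sqrt (l * (1 - l)) * (1 + Real.sqrt (l * (1 - l))) := by
  have hg0 : g 0 = Real.sqrt (l * (1 - l)) *
      (2 + 1 / Real.sqrt 2 * Real.sqrt (8 * (l * (1 - l)))) := by
    rw [hg 0]
    simp only [mul_zero, Real.sin_zero, Real.cos_zero, abs_zero, add_zero]
    ring_nf
  refine ⟨fun θ => ?_, ?_⟩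
  · rw [hg0, hg θ]
    gcongr ?_ * (?_ + 1 / Real.sqrt 2 * ?_)
    · exact le_add_of_nonneg_right (abs_nonneg _)
    · exact Real.sqrt_le_sqrt (eight_mul_le_radicand l (Real.cos_le_one _))
  · rw [hg0, one_div_sqrt_two_mul_sqrt_eight_mul]
    ring

/-- The basis-dependent one-norm quantity is minimized at `θ = 0` with value
`2√(λ(1−λ))(1+√(λ(1−λ)))`. -/
theorem stmt10 (l : ℝ) (hl : l ∈ Set.Icc (0 : ℝ) 1)
    (g : ℝ → ℝ)
    (hg : ∀ θ, g θ = Real.sqrt (l * (1 - l)) *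
      ((2 + |(1 - 2 * l) * Real.sin (2 * θ)|) +
        (1 / Real.sqrt 2) * Real.sqrt (1 + 4 * l * (1 - l)
          + (4 * l * (1 - l) - 1) * Real.cos (4 * θ)))) :
    (∀ θ, g 0 ≤ g θ) ∧
      g 0 = 2 * Real.sqrt (l * (1 - l)) * (1 + Real.sqrt (l * (1 - l))) :=
  stmt10_general l g hg
end

section
/- Let ρ = p ρ_0 ⊗ |0⟩⟨0| + (1−p) ρ_1 ⊗ |1⟩⟨1| be a two-qubit quantum-classical state with ρ_i = (I + s_i·σ)/2, s_0 = (0,0,s₀), s_1 = (s₁ sin φ, 0, s₁ cos φ). Measuring in the computational basis {|0⟩, |1⟩} of qubit B, the only nonzero commutator among the A_ij is [A_00, A_11] (up to sign and adjoints), and its Hilbert–Schmidt norm satisfies ‖[A_00, A_11]‖₂ = p(1−p) s₀ s₁ |sin φ| / √2, so that D_{p=2}(ρ) = p(1−p) s₀ s₁ sin φ / √2 for φ ∈ [0, π]. -/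
/-!
Only the diagonal blocks `A₀₀ = p ρ₀` and `A₁₁ = (1 - p) ρ₁` of a quantum-classical state are
nonzero, so `[A₀₀, A₁₁]` and its negative are the only nonzero commutators. Writing
`ρ_i = (1 + s_i · σ) / 2`, the identity parts drop out and the Pauli relations give
`[u · σ, v · σ] = 2i (u × v) · σ`, while `‖w · σ‖₂² = 2 |w|²`. The Bloch vectors `(0, 0, s₀)` and
`(s₁ sin φ, 0, s₁ cos φ)` have cross product `(0, s₀ s₁ sin φ, 0)`.
-/

open Matrix Complex

theorem re_trace_mul_conjTranspose_self {m n : Type*} [Fintype m] [Fintype n]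
    (X : Matrix m n ℂ) : (X * Xᴴ).trace.re = ∑ i, ∑ j, ‖X i j‖ ^ 2 := by
  simp only [trace, diag_apply, mul_apply, conjTranspose_apply, RCLike.star_def, Complex.mul_conj,
    Complex.normSq_eq_norm_sq, Complex.re_sum, Complex.ofReal_re]

theorem re_trace_smul_mul_conjTranspose_smul {m n : Type*} [Fintype m] [Fintype n]
    (c : ℂ) (X : Matrix m n ℂ) :
    ((c • X) * (c • X)ᴴ).trace.re = ‖c‖ ^ 2 * (X * Xᴴ).trace.re := by
  simp only [re_trace_mul_conjTranspose_self, Matrix.smul_apply, smul_eq_mul, norm_mul, mul_pow,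
    Finset.mul_sum]

def pauliX : Matrix (Fin 2) (Fin 2) ℂ := !![0, 1; 1, 0]
def pauliY : Matrix (Fin 2) (Fin 2) ℂ := !![0, -I; I, 0]
def pauliZ : Matrix (Fin 2) (Fin 2) ℂ := !![1, 0; 0, -1]

noncomputable def blochMatrix (v : Fin 3 → ℝ) : Matrix (Fin 2) (Fin 2) ℂ :=
  (v 0 : ℂ) • pauliX + (v 1 : ℂ) • pauliY + (v 2 : ℂ) • pauliZ

noncomputable def qubitState (v : Fin 3 → ℝ) : Matrix (Fin 2) (Fin 2) ℂ :=
  (1 / 2 : ℂ) • (1 + blochMatrix v)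

theorem blochMatrix_commutator (u v : Fin 3 → ℝ) :
    blochMatrix u * blochMatrix v - blochMatrix v * blochMatrix u =
      (2 * I) • blochMatrix (u ⨯₃ v) := by
  ext i j
  fin_cases i <;> fin_cases j <;>
    simp [blochMatrix, pauliX, pauliY, pauliZ, cross_apply] <;> ring_nf <;> simp <;> ring

theorem re_trace_blochMatrix_mul_conjTranspose (v : Fin 3 → ℝ) :
    (blochMatrix v * (blochMatrix v)ᴴ).trace.re = 2 * (v ⬝ᵥ v) := by
  rw [re_trace_mul_conjTranspose_self]
  simp [blochMatrix, Fin.sum_univ_two, pauliX, pauliY, pauliZ, dotProduct,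
    Fin.sum_univ_three, Complex.sq_norm, Complex.normSq_apply]
  ring

theorem smul_one_add_commutator {R A : Type*} [CommRing R] [Ring A] [Algebra R A]
    (a b : R) (X Y : A) :
    (a • (1 + X)) * (b • (1 + Y)) - (b • (1 + Y)) * (a • (1 + X)) = (a * b) • (X * Y - Y * X) := by
  simp only [smul_mul_smul_comm, mul_add, add_mul, one_mul, mul_one, mul_comm b a, ← smul_sub]
  congr 1; abel

theorem smul_qubitState_commutator (a b : ℂ) (u v : Fin 3 → ℝ) :
    (a • qubitState u) * (b • qubitState v) - (b • qubitState v) * (a • qubitState u) =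
      (a * b * I / 2) • blochMatrix (u ⨯₃ v) := by
  simp only [qubitState, smul_smul, smul_one_add_commutator, blochMatrix_commutator]
  congr 1; ring

theorem blocks_of_quantumClassical {p : ℝ} {ρ0 ρ1 : Matrix (Fin 2) (Fin 2) ℂ}
    {ρ : Matrix (Fin 2 × Fin 2) (Fin 2 × Fin 2) ℂ} {A : Fin 2 → Fin 2 → Matrix (Fin 2) (Fin 2) ℂ}
    (hρ : ∀ a b a' b', ρ (a, b) (a', b') =
      (if b = 0 ∧ b' = 0 then (p : ℂ) * ρ0 a a' else 0) +
      (if b = 1 ∧ b' = 1 then ((1 - p : ℝ) : ℂ) * ρ1 a a' else 0))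
    (hA : ∀ i j a a', A i j a a' = ρ (a, i) (a', j)) :
    A 0 0 = (p : ℂ) • ρ0 ∧ A 1 1 = ((1 - p : ℝ) : ℂ) • ρ1 ∧ ∀ i j, i ≠ j → A i j = 0 := by
  refine ⟨?_, ?_, fun i j hij => ?_⟩ <;> ext a a'
  · simp [hA, hρ]
  · simp [hA, hρ]
  · fin_cases i <;> fin_cases j <;> simp [hA, hρ] at hij ⊢

/-- For the two-qubit quantum-classical state, only the commutator `[A₀₀, A₁₁]` (up to
order) is nonzero, its Hilbert–Schmidt norm is `p(1−p)s₀s₁|sin φ|/√2`, and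
`D_{p=2}(ρ) = p(1−p)s₀s₁ sin φ / √2`. -/
theorem stmt17 (p s0 s1 φ : ℝ) (hp : p ∈ Set.Icc (0 : ℝ) 1)
    (hs0 : s0 ∈ Set.Icc (0 : ℝ) 1) (hs1 : s1 ∈ Set.Icc (0 : ℝ) 1)
    (hφ : φ ∈ Set.Icc (0 : ℝ) Real.pi)
    (ρ0 ρ1 : Matrix (Fin 2) (Fin 2) ℂ)
    (hρ0 : ρ0 = (1 / 2 : ℂ) • (1 + (s0 : ℂ) • !![1, 0; 0, -1]))
    (hρ1 : ρ1 = (1 / 2 : ℂ) • (1 + ((s1 * Real.sin φ : ℝ) : ℂ) • !![0, 1; 1, 0]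
        + ((s1 * Real.cos φ : ℝ) : ℂ) • !![1, 0; 0, -1]))
    (ρ : Matrix (Fin 2 × Fin 2) (Fin 2 × Fin 2) ℂ)
    (hρ : ∀ a b a' b', ρ (a, b) (a', b') =
      (if b = 0 ∧ b' = 0 then (p : ℂ) * ρ0 a a' else 0) +
      (if b = 1 ∧ b' = 1 then ((1 - p : ℝ) : ℂ) * ρ1 a a' else 0))
    (A : Fin 2 → Fin 2 → Matrix (Fin 2) (Fin 2) ℂ)
    (hA : ∀ i j a a', A i j a a' = ρ (a, i) (a', j)) :
    (∀ i j k l : Fin 2,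
      ¬(((i, j) = ((0 : Fin 2), (0 : Fin 2)) ∧ (k, l) = ((1 : Fin 2), (1 : Fin 2))) ∨
        ((i, j) = ((1 : Fin 2), (1 : Fin 2)) ∧ (k, l) = ((0 : Fin 2), (0 : Fin 2)))) →
      A i j * A k l - A k l * A i j = 0) ∧
    Real.sqrt (((A 0 0 * A 1 1 - A 1 1 * A 0 0) *
        (A 0 0 * A 1 1 - A 1 1 * A 0 0)ᴴ).trace.re)
      = p * (1 - p) * s0 * s1 * |Real.sin φ| / Real.sqrt 2 ∧
    Real.sqrt ((1 / 2) * ∑ i : Fin 2, ∑ j : Fin 2, ∑ k : Fin 2, ∑ l : Fin 2,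
        ((A i j * A k l - A k l * A i j) * (A i j * A k l - A k l * A i j)ᴴ).trace.re)
      = p * (1 - p) * s0 * s1 * Real.sin φ / Real.sqrt 2 := by
  obtain ⟨hA00, hA11, hAoff⟩ := blocks_of_quantumClassical hρ hA
  have hρ0' : ρ0 = qubitState ![0, 0, s0] := by
    subst hρ0; simp [qubitState, blochMatrix, pauliZ]
  have hρ1' : ρ1 = qubitState ![s1 * Real.sin φ, 0, s1 * Real.cos φ] := by
    subst hρ1; simp [qubitState, blochMatrix, pauliX, pauliZ, add_assoc]
  set N := p * (1 - p) * s0 * s1 * |Real.sin φ| / Real.sqrt 2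
  have hN : 0 ≤ N := by
    have : 0 ≤ 1 - p := sub_nonneg.mpr hp.2
    have := hp.1; have := hs0.1; have := hs1.1
    positivity
  have hnormSq : ((A 0 0 * A 1 1 - A 1 1 * A 0 0) *
      (A 0 0 * A 1 1 - A 1 1 * A 0 0)ᴴ).trace.re = N ^ 2 := by
    rw [hA00, hA11, hρ0', hρ1', smul_qubitState_commutator, re_trace_smul_mul_conjTranspose_smul,
      re_trace_blochMatrix_mul_conjTranspose]
    simp only [norm_div, norm_mul, Complex.norm_real, Complex.norm_I, Real.norm_eq_abs,
      Complex.norm_ofNat, cross_apply, dotProduct, Fin.sum_univ_three]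
    simp [N, div_pow, mul_pow]
    ring
  refine ⟨fun i j k l h => ?_, ?_, ?_⟩
  · fin_cases i <;> fin_cases j <;> fin_cases k <;> fin_cases l <;> simp [hAoff] at h ⊢
  · rw [hnormSq, Real.sqrt_sq hN]
  · have hswap : A 1 1 * A 0 0 - A 0 0 * A 1 1 = -(A 0 0 * A 1 1 - A 1 1 * A 0 0) :=
      (neg_sub _ _).symm
    rw [← abs_of_nonneg (Real.sin_nonneg_of_nonneg_of_le_pi hφ.1 hφ.2)]
    refine (congrArg Real.sqrt ?_).trans (Real.sqrt_sq hN)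
    simp only [Fin.sum_univ_two]
    rw [hswap, conjTranspose_neg, neg_mul_neg, hnormSq]
    simp [hAoff]
    ring
end
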